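/- arXiv:2107.14117 — 2 statements merged into one kernel-verified Lean document; each statement's English description precedes it below -/
import Mathlib

section
/- If a function f : ℝ² → ℝ is exponential along every line (i.e., its restriction to every affine line t ↦ f(p + t·v) has the form t ↦ C·exp(λt) for some constants C, λ depending on the line), and f is smooth and positive, then f(x,y) = exp(a·x + b·y + c) for some real constants a, b, c. -/
/-!
Taking logarithms, `log f` is affine along every line. A function on a real vector space that
is affine along every line is affine: homogeneity comes from the lines through `0`, and
additivity from evaluating at the midpoint of `x` and `y` and then scaling by `2`.
-/

open Real

theorem log_eq_of_eq_mul_exp {φ : ℝ → ℝ} {C lam : ℝ} (hC : 0 < C)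
    (hφ : ∀ t, φ t = C * exp (lam * t)) (t : ℝ) :
    log (φ t) = log (φ 0) + t * (log (φ 1) - log (φ 0)) := by
  have hlog : ∀ s, log (φ s) = log C + lam * s := fun s => by
    rw [hφ s, log_mul hC.ne' (exp_pos _).ne', log_exp]
  rw [hlog t, hlog 0, hlog 1]
  ring

section AffineAlongLines

variable {E : Type*} [AddCommGroup E] [Module ℝ E] {g : E → ℝ}

def IsAffineAlongLines (g : E → ℝ) : Prop :=
  ∀ p v : E, ∀ t : ℝ, g (p + t • v) = g p + t * (g (p + v) - g p)

theorem IsAffineAlongLines.map_smul_sub (hg : IsAffineAlongLines g) (t : ℝ) (x : E) :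
    g (t • x) - g 0 = t * (g x - g 0) := by
  have h := hg 0 x t
  simp only [zero_add] at h
  linarith

theorem IsAffineAlongLines.map_add_sub (hg : IsAffineAlongLines g) (x y : E) :
    g (x + y) - g 0 = (g x - g 0) + (g y - g 0) := by
  have hmid : g (x + (1 / 2 : ℝ) • (y - x)) = g x + 1 / 2 * (g y - g x) := by
    simpa using hg x (y - x) (1 / 2)
  have hdouble : x + y = (2 : ℝ) • (x + (1 / 2 : ℝ) • (y - x)) := by module
  rw [hdouble, hg.map_smul_sub, hmid]
  ring

theorem IsAffineAlongLines.exists_linearMap (hg : IsAffineAlongLines g) :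
    ∃ L : E →ₗ[ℝ] ℝ, ∀ x, g x = g 0 + L x :=
  ⟨{ toFun := fun x => g x - g 0
     map_add' := hg.map_add_sub
     map_smul' := hg.map_smul_sub },
    fun x => by simp⟩

end AffineAlongLines

theorem exponential_along_lines_two_dim_general
    (f : ℝ × ℝ → ℝ)
    (hpos : ∀ p, 0 < f p)
    (hline : ∀ p v : ℝ × ℝ, ∃ C lam : ℝ, 0 < C ∧
      ∀ t : ℝ, f (p + t • v) = C * Real.exp (lam * t)) :
    ∃ a b c : ℝ, ∀ x y : ℝ, f (x, y) = Real.exp (a * x + b * y + c) := by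
  have hlog : IsAffineAlongLines fun p => log (f p) := fun p v t => by
    obtain ⟨C, lam, hC, h⟩ := hline p v
    simpa using log_eq_of_eq_mul_exp (φ := fun t => f (p + t • v)) hC h t
  obtain ⟨L, hL⟩ := hlog.exists_linearMap
  refine ⟨L (1, 0), L (0, 1), log (f 0), fun x y => ?_⟩
  have hxy : ((x, y) : ℝ × ℝ) = x • (1, 0) + y • (0, 1) := by simp
  rw [← exp_log (hpos (x, y)), hL, hxy, map_add, map_smul, map_smul, smul_eq_mul, smul_eq_mul]
  congr 1
  ring

/-- A smooth positive function on ℝ² that is exponential along every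
affine line (i.e. `t ↦ f (p + t • v)` equals `t ↦ C * exp (λ t)` for constants
`C > 0`, `λ` depending on the line) is of the form `f (x, y) = exp (a x + b y + c)`. -/
theorem exponential_along_lines_two_dim
    (f : ℝ × ℝ → ℝ)
    (hsmooth : ContDiff ℝ (⊤ : ℕ∞) f)
    (hpos : ∀ p, 0 < f p)
    (hline : ∀ p v : ℝ × ℝ, ∃ C lam : ℝ, 0 < C ∧
      ∀ t : ℝ, f (p + t • v) = C * Real.exp (lam * t)) :
    ∃ a b c : ℝ, ∀ x y : ℝ, f (x, y) = Real.exp (a * x + b * y + c) :=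
  exponential_along_lines_two_dim_general f hpos hline
end

section
/- If a function f : ℝⁿ → ℝ is smooth, positive, and exponential along every affine line, then there exist a ∈ ℝⁿ and b ∈ ℝ such that f(x) = exp(⟨a, x⟩ + b) for all x. -/
/-! Along each line `log f` is affine in the line parameter. A function on a real vector space
that is affine along every line is affine: homogeneity comes from the lines through `0`, and
additivity from evaluating at the midpoint `(x + y) / 2` of the segment from `x` to `y`.
By Riesz representation the linear part is `⟪a, ·⟫`. -/

open Real

theorem exists_linearMap_of_affine_along_lines {E : Type*} [AddCommGroup E] [Module ℝ E]
    {g : E → ℝ} (hg : ∀ (p v : E) (t : ℝ), g (p + t • v) = g p + t * (g (p + v) - g p)) :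
    ∃ L : E →ₗ[ℝ] ℝ, ∀ x, g x = L x + g 0 := by
  have hsmul : ∀ (t : ℝ) (x : E), g (t • x) - g 0 = t * (g x - g 0) := fun t x => by
    simpa [sub_eq_iff_eq_add'] using hg 0 x t
  have hadd : ∀ x y : E, g (x + y) - g 0 = (g x - g 0) + (g y - g 0) := fun x y => by
    have hmid := hg x (y - x) (1 / 2)
    rw [show x + (1 / 2 : ℝ) • (y - x) = (1 / 2 : ℝ) • (x + y) by module,
      add_sub_cancel] at hmid
    linarith [hsmul (1 / 2) (x + y)]
  exact ⟨⟨⟨fun x => g x - g 0, hadd⟩, hsmul⟩, fun x => by simp⟩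

theorem exponential_along_lines_general
    (n : ℕ) (f : EuclideanSpace ℝ (Fin n) → ℝ)
    (hpos : ∀ x, 0 < f x)
    (hline : ∀ p v : EuclideanSpace ℝ (Fin n), ∃ C lam : ℝ, 0 < C ∧
      ∀ t : ℝ, f (p + t • v) = C * Real.exp (lam * t)) :
    ∃ (a : EuclideanSpace ℝ (Fin n)) (b : ℝ), ∀ x,
      f x = Real.exp ((inner ℝ a x : ℝ) + b) := by
  obtain ⟨L, hL⟩ := exists_linearMap_of_affine_along_lines (g := fun x => log (f x))
    fun p v t => by
      obtain ⟨C, lam, hC, hf⟩ := hline p v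
      simpa using log_eq_of_eq_mul_exp (φ := fun t => f (p + t • v)) hC hf t
  refine ⟨(InnerProductSpace.toDual ℝ _).symm (LinearMap.toContinuousLinearMap L),
    log (f 0), fun x => ?_⟩
  rw [InnerProductSpace.toDual_symm_apply, LinearMap.coe_toContinuousLinearMap', ← hL,
    exp_log (hpos x)]

/-- A smooth positive function on ℝⁿ that is exponential along every
affine line is of the form `x ↦ exp (⟨a, x⟩ + b)`. -/
theorem exponential_along_lines
    (n : ℕ) (f : EuclideanSpace ℝ (Fin n) → ℝ)
    (hsmooth : ContDiff ℝ (⊤ : ℕ∞) f)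
    (hpos : ∀ x, 0 < f x)
    (hline : ∀ p v : EuclideanSpace ℝ (Fin n), ∃ C lam : ℝ, 0 < C ∧
      ∀ t : ℝ, f (p + t • v) = C * Real.exp (lam * t)) :
    ∃ (a : EuclideanSpace ℝ (Fin n)) (b : ℝ), ∀ x,
      f x = Real.exp ((inner ℝ a x : ℝ) + b) :=
  exponential_along_lines_general n f hpos hline
end
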